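/- In the free algebra ℚ⟨a,b⟩, for every m ≥ 1 the element Z_m(a,b) := Σ_{j=1}^{m−1} ((−1)^j/j) [ Σ_{𝒜 ⊆ {1,...,j}, j+|𝒜| < m} y_{𝒜,j}(a,b) − a^j − b^j ] is a sum of commutators, i.e., lies in the commutator subspace of ℚ⟨a,b⟩. -/

import Mathlib

/-!
Expanding the products, the part of degree `n` of `∑_{𝒜 ⊆ {1,…,j}} y_{𝒜,j}(a,b)` is the sum
of the words `w` of length `n` in `a, b`, each counted as often as `w` can be cut into `j`
blocks `a`, `b`, `ab`, that is `C(o, n - j)` times, where `o` is the number of occurrences of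
`ab` in `w`. Modulo commutators a word equals each of its rotations, so the coefficient of `w`
may be replaced by its average over the `n` rotations of `w`. If `c` counts the occurrences of
`ab` in the cyclic word `w`, the rotations sum `C(o, n - j)` to `j * C(c, n - j)`: the factor
`1 / j` cancels, and the averaged coefficient of `w` in `∑_j (-1)^j / j ∑_𝒜 y_{𝒜,j}` is
`(1 / n) ∑_{j ≥ 1} (-1)^j C(c, n - j)`, which vanishes unless `c = 0` because `c < n`. The
words with `c = 0` are `aⁿ` and `bⁿ`, and their contribution `(-1)ⁿ / n (aⁿ + bⁿ)` is exactly
what the terms `- a^j - b^j` remove.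
-/

open Finset

namespace List

variable {α : Type*}

theorem sum_range_rotate_succ {M : Type*} [AddCancelCommMonoid M] (l : List α)
    (g : List α → M) :
    ∑ r ∈ Finset.range l.length, g (l.rotate (r + 1)) =
      ∑ r ∈ Finset.range l.length, g (l.rotate r) := by
  have h := (Finset.sum_range_succ' (fun r => g (l.rotate r)) l.length).symm.trans
    (Finset.sum_range_succ (fun r => g (l.rotate r)) l.length)
  rwa [rotate_length, rotate_zero, add_left_inj] at h

theorem getLast?_rotate_one (l : List α) : (l.rotate 1).getLast? = l.head? := by
  cases l with
  | nil => rfl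
  | cons x t => simp [rotate_cons_succ]

variable [DecidableEq α]

theorem sum_range_getElem?_eq_count (l : List α) (x : α) :
    ∑ r ∈ Finset.range l.length, (if l[r]? = some x then 1 else 0) = l.count x := by
  induction l with
  | nil => rfl
  | cons y l ih =>
    rw [length_cons, Finset.sum_range_succ', count_cons]
    simp [ih]

theorem sum_range_getLast?_rotate_eq_count (l : List α) (x : α) :
    ∑ r ∈ Finset.range l.length, (if (l.rotate r).getLast? = some x then 1 else 0) =
      l.count x := by
  rw [← sum_range_rotate_succ l (fun v => if v.getLast? = some x then 1 else 0),
    ← sum_range_getElem?_eq_count]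
  refine sum_congr rfl fun r hr => ?_
  rw [← rotate_rotate, getLast?_rotate_one, head?_rotate (mem_range.1 hr)]

theorem count_dropLast_add (l : List α) (x : α) :
    l.dropLast.count x + (if l.getLast? = some x then 1 else 0) = l.count x := by
  rcases eq_nil_or_concat l with rfl | ⟨L, y, rfl⟩
  · rfl
  · simp [count_append, count_singleton]

-- Exactly `l.count x` rotations of `l` end in `x`, and only these lose an `x` in `dropLast`.
theorem sum_range_choose_count_dropLast_rotate (l : List α) (x : α) (s : ℕ) :
    ∑ r ∈ Finset.range l.length, ((l.rotate r).dropLast.count x).choose s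
      = (l.length - s) * (l.count x).choose s := by
  obtain ⟨c, hc⟩ : ∃ c, l.count x = c := ⟨_, rfl⟩
  let EndsIn : ℕ → Prop := fun r => (l.rotate r).getLast? = some x
  have hterm : ∀ r, ((l.rotate r).dropLast.count x).choose s =
      if EndsIn r then (c - 1).choose s else c.choose s := by
    intro r
    have h := count_dropLast_add (l.rotate r) x
    rw [(rotate_perm l r).count_eq x] at h
    split_ifs at h ⊢ <;> congr 1 <;> omega
  have hcard : #{r ∈ Finset.range l.length | EndsIn r} = c := by
    rw [card_filter, sum_range_getLast?_rotate_eq_count, hc]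
  have hcard' : #{r ∈ Finset.range l.length | ¬EndsIn r} = l.length - c := by
    have := card_filter_add_card_filter_not (s := Finset.range l.length) EndsIn
    rw [card_range, hcard] at this
    omega
  have hcn : c ≤ l.length := hc ▸ count_le_length
  rw [sum_congr rfl fun r _ => hterm r, sum_ite, sum_const, sum_const, hcard, hcard',
    smul_eq_mul, smul_eq_mul, hc]
  rcases c with _ | c
  · rcases s with _ | s <;> simp
  · rw [Nat.add_sub_cancel]
    rcases le_or_gt s (c + 1) with hs | hs
    · rw [mul_comm, Nat.choose_mul_succ_eq, mul_comm, ← add_mul]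
      congr 1
      omega
    · simp [Nat.choose_eq_zero_of_lt hs, Nat.choose_eq_zero_of_lt (Nat.lt_of_succ_lt hs)]

end List

theorem Int.sum_range_neg_one_pow_mul_choose_sub {c n : ℕ} (h : c ≤ n) :
    ∑ j ∈ Finset.range (n + 1), (-1 : ℤ) ^ j * c.choose (n - j) =
      if c = 0 then (-1) ^ n else 0 := by
  set g : ℕ → ℤ := fun s => (-1) ^ (n - s) * c.choose s
  have hsign : ∀ s ≤ n, (-1 : ℤ) ^ (n - s) = (-1) ^ n * (-1) ^ s := by
    intro s hs
    rw [← Nat.sub_add_cancel hs, Nat.add_sub_cancel, pow_add, mul_assoc, ← pow_add,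
      Even.neg_one_pow ⟨s, rfl⟩, mul_one]
  calc ∑ j ∈ Finset.range (n + 1), (-1 : ℤ) ^ j * c.choose (n - j)
      = ∑ j ∈ Finset.range (n + 1), g (n + 1 - 1 - j) := by
        refine sum_congr rfl fun j hj => ?_
        rw [mem_range] at hj
        simp only [g, Nat.add_sub_cancel, Nat.sub_sub_self (Nat.le_of_lt_succ hj)]
    _ = ∑ s ∈ Finset.range (n + 1), g s := sum_range_reflect g (n + 1)
    _ = (-1) ^ n * ∑ s ∈ Finset.range (c + 1), (-1) ^ s * (c.choose s : ℤ) := by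
        rw [mul_sum, ← sum_subset (range_subset_range.2 (Nat.succ_le_succ h))]
        · refine sum_congr rfl fun s hs => ?_
          rw [← mul_assoc, ← hsign s (by simp at hs; omega)]
        · intro s _ hs
          rw [mem_range, not_lt] at hs
          simp only [g, Nat.choose_eq_zero_of_lt hs, Nat.cast_zero, mul_zero]
    _ = if c = 0 then (-1) ^ n else 0 := by
        rw [Int.alternating_sum_range_choose]
        split_ifs <;> simp

theorem Finset.sum_powerset_map {α β M : Type*} [AddCommMonoid M] (s : Finset α) (e : α ↪ β)
    (f : Finset β → M) :
    ∑ t ∈ (s.map e).powerset, f t = ∑ t ∈ s.powerset, f (t.map e) := by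
  classical
  have h : (s.map e).powerset = s.powerset.image (Finset.map e) := by
    ext t
    simp [Finset.subset_map_iff, eq_comm]
  rw [h, Finset.sum_image fun _ _ _ _ h => Finset.map_injective e h]

theorem Finset.range_add_one_eq_insert_map (j : ℕ) :
    range (j + 1) = insert 0 ((range j).map (addRightEmbedding 1)) := by
  ext k
  cases k <;> simp

namespace BoolWord

section Combinatorics

open List

/- Words in `a, b` are lists of booleans, `true` standing for `a` and `false` for `b`. Entry `i`
of `abMarks w` tells whether the letters `i` and `i + 1` of the cyclic word `w` read `ab`. -/
def abMarks (w : List Bool) : List Bool := zipWith (fun x y => x && !y) w (w.rotate 1)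

def cyclicAbCount (w : List Bool) : ℕ := (abMarks w).count true

def abCount (w : List Bool) : ℕ := (zipWith (fun x y => x && !y) w w.tail).count true

theorem length_abMarks (w : List Bool) : (abMarks w).length = w.length := by
  simp [abMarks]

theorem abMarks_rotate (w : List Bool) (r : ℕ) :
    abMarks (w.rotate r) = (abMarks w).rotate r := by
  rw [abMarks, abMarks, zipWith_rotate_distrib _ _ _ _ (length_rotate ..).symm, rotate_rotate,
    rotate_rotate, add_comm]

theorem cyclicAbCount_rotate (w : List Bool) (r : ℕ) :
    cyclicAbCount (w.rotate r) = cyclicAbCount w := by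
  rw [cyclicAbCount, abMarks_rotate, (rotate_perm _ r).count_eq true, cyclicAbCount]

theorem dropLast_abMarks (w : List Bool) :
    (abMarks w).dropLast = zipWith (fun x y => x && !y) w w.tail := by
  rcases w with _ | ⟨x, t⟩
  · rfl
  obtain ⟨L, y, hL⟩ := (eq_nil_or_concat (x :: t)).resolve_left (cons_ne_nil x t)
  have hlen : L.length = t.length := by simpa using congrArg length hL.symm
  rw [abMarks, rotate_cons_succ, rotate_zero, tail_cons, hL, concat_eq_append,
    zipWith_append hlen, ← append_nil t, zipWith_append hlen]
  simp

theorem abCount_eq_count_dropLast_abMarks (w : List Bool) :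
    abCount w = (abMarks w).dropLast.count true := by
  rw [dropLast_abMarks, abCount]

theorem sum_range_choose_abCount_rotate (w : List Bool) (s : ℕ) :
    ∑ r ∈ Finset.range w.length, (abCount (w.rotate r)).choose s
      = (w.length - s) * (cyclicAbCount w).choose s := by
  simp_rw [abCount_eq_count_dropLast_abMarks, abMarks_rotate]
  rw [← length_abMarks, sum_range_choose_count_dropLast_rotate, cyclicAbCount]

theorem abCount_cons_cons (x y : Bool) (t : List Bool) :
    abCount (x :: y :: t) = abCount (y :: t) + if x && !y then 1 else 0 := by
  simp [abCount, count_cons, add_comm]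

theorem abCount_false_cons (t : List Bool) : abCount (false :: t) = abCount t := by
  rcases t with _ | ⟨y, t⟩
  · rfl
  · simp [abCount_cons_cons]

theorem abCount_lt_length {w : List Bool} (hw : w ≠ []) : abCount w < w.length := by
  have h : abCount w ≤ w.length - 1 := count_le_length.trans (by simp)
  have := length_pos_iff.2 hw
  omega

-- The number of ways to cut `w` into `j` blocks `a`, `b`, `ab`.
def parseCount : ℕ → List Bool → ℕ
  | 0, w => if w = [] then 1 else 0
  | _ + 1, [] => 0
  | j + 1, [_] => parseCount j []
  | j + 1, x :: y :: t => parseCount j (y :: t) + if x && !y then parseCount j t else 0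

theorem parseCount_eq_choose (j : ℕ) (w : List Bool) :
    parseCount j w = if j ≤ w.length then (abCount w).choose (w.length - j) else 0 := by
  induction j generalizing w with
  | zero =>
    rcases w with _ | ⟨x, t⟩
    · rfl
    · rw [if_pos (Nat.zero_le _), Nat.sub_zero,
        Nat.choose_eq_zero_of_lt (abCount_lt_length (cons_ne_nil x t))]
      rfl
  | succ j ih =>
    match w with
    | [] => simp [parseCount]
    | [x] => simp [parseCount, ih, abCount]
    | x :: y :: t =>
      rw [parseCount, ih, ih, abCount_cons_cons]
      simp only [length_cons]
      by_cases hxy : (x && !y) = true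
      · obtain ⟨rfl, rfl⟩ : x = true ∧ y = false := by simpa using hxy
        rw [abCount_false_cons]
        simp only [hxy, if_true]
        rcases Nat.lt_or_ge (t.length + 1) j with hj | hj
        · simp [show ¬ j ≤ t.length by omega, show ¬ j ≤ t.length + 1 by omega]
        rcases hj.lt_or_eq with hj | rfl
        · rw [if_pos hj.le, if_pos (by omega), if_pos (by omega),
            show t.length + 1 + 1 - (j + 1) = (t.length - j) + 1 by omega,
            show t.length + 1 - j = (t.length - j) + 1 by omega, Nat.choose_succ_succ', add_comm]
        · simp
      · simp only [hxy, if_false, add_zero, Bool.false_eq_true]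
        split_ifs <;> first | omega | congr 1; omega

theorem sum_range_parseCount_rotate (j : ℕ) (w : List Bool) :
    ∑ r ∈ Finset.range w.length, parseCount j (w.rotate r)
      = if j ≤ w.length then j * (cyclicAbCount w).choose (w.length - j) else 0 := by
  simp_rw [parseCount_eq_choose, length_rotate]
  split_ifs with hj
  · rw [sum_range_choose_abCount_rotate, Nat.sub_sub_self hj]
  · simp

theorem count_true_zipWith_le_left (u v : List Bool) :
    (zipWith (fun x y => x && !y) u v).count true ≤ u.count true := by
  induction u generalizing v with
  | nil => simp
  | cons x u ih =>
    rcases v with _ | ⟨y, v⟩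
    · simp
    · have := ih v
      cases x <;> cases y <;> simp <;> omega

theorem count_true_zipWith_le_right (u v : List Bool) :
    (zipWith (fun x y => x && !y) u v).count true ≤ v.count false := by
  induction u generalizing v with
  | nil => simp
  | cons x u ih =>
    rcases v with _ | ⟨y, v⟩
    · simp
    · have := ih v
      cases x <;> cases y <;> simp <;> omega

theorem cyclicAbCount_lt_length {w : List Bool} (hw : w ≠ []) :
    cyclicAbCount w < w.length := by
  have h1 := count_true_zipWith_le_left w (w.rotate 1)
  have h2 := count_true_zipWith_le_right w (w.rotate 1)
  rw [(rotate_perm w 1).count_eq] at h2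
  have := count_true_add_count_false w
  have := length_pos_iff.2 hw
  simp only [cyclicAbCount, abMarks]
  omega

theorem abCount_le_cyclicAbCount (w : List Bool) : abCount w ≤ cyclicAbCount w := by
  rw [abCount_eq_count_dropLast_abMarks]
  exact (dropLast_sublist _).count_le _

theorem abCount_true_cons_pos {t : List Bool} (ht : false ∈ t) : 0 < abCount (true :: t) := by
  induction t with
  | nil => simp at ht
  | cons y t ih =>
    rw [abCount_cons_cons]
    cases y
    · simp
    · simpa using ih (by simpa using ht)

theorem cyclicAbCount_eq_zero_iff {w : List Bool} :
    cyclicAbCount w = 0 ↔ w = replicate w.length true ∨ w = replicate w.length false := by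
  constructor
  · intro h0
    by_contra hne
    have hmem : ∀ x, x ∈ w := by
      intro x
      by_contra hx
      apply hne
      cases x
      · exact Or.inl (eq_replicate_iff.2 ⟨rfl, fun y hy => by cases y <;> simp_all⟩)
      · exact Or.inr (eq_replicate_iff.2 ⟨rfl, fun y hy => by cases y <;> simp_all⟩)
    obtain ⟨i, hi, hwi⟩ := mem_iff_getElem.1 (hmem true)
    obtain ⟨t, ht⟩ := head?_eq_some_iff.1
      ((head?_rotate hi).trans ((getElem?_eq_getElem hi).trans (congrArg some hwi)))
    have hf : false ∈ w.rotate i := mem_rotate.2 (hmem false)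
    rw [ht] at hf
    replace hf : false ∈ t := by simpa using hf
    have := (abCount_true_cons_pos hf).trans_le (abCount_le_cyclicAbCount _)
    rw [← ht, cyclicAbCount_rotate, h0] at this
    exact this.false
  · rintro (h | h) <;> rw [h] <;> simp [cyclicAbCount, abMarks, rotate_replicate, count_replicate]

end Combinatorics

-- The coefficient of the word `w` in `∑_{j=1}^{M} (-1)^j / j • (a + b + ab)^j`.
def logCoeff (M : ℕ) (w : List Bool) : ℚ := ∑ j ∈ Icc 1 M, (-1) ^ j / j * parseCount j w

theorem logCoeff_nil (M : ℕ) : logCoeff M [] = 0 :=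
  sum_eq_zero fun j hj => by
    rw [mem_Icc] at hj
    obtain ⟨j, rfl⟩ := Nat.exists_eq_add_one_of_ne_zero (by omega : j ≠ 0)
    simp [parseCount]

theorem sum_range_logCoeff_rotate {M : ℕ} {w : List Bool} (hw : w ≠ []) (hM : w.length ≤ M) :
    ∑ r ∈ range w.length, logCoeff M (w.rotate r) =
      if cyclicAbCount w = 0 then (-1) ^ w.length else 0 := by
  have hc := cyclicAbCount_lt_length hw
  calc ∑ r ∈ range w.length, logCoeff M (w.rotate r)
      = ∑ j ∈ Icc 1 M, (-1) ^ j / j *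
          ((∑ r ∈ range w.length, parseCount j (w.rotate r) : ℕ) : ℚ) := by
        simp only [logCoeff, Nat.cast_sum, mul_sum]
        exact sum_comm
    _ = ∑ j ∈ Icc 1 w.length, (-1) ^ j * ((cyclicAbCount w).choose (w.length - j) : ℚ) := by
        rw [← sum_subset (Icc_subset_Icc_right hM)]
        · refine sum_congr rfl fun j hj => ?_
          rw [mem_Icc] at hj
          have hj0 : (j : ℚ) ≠ 0 := by exact_mod_cast (by omega : j ≠ 0)
          rw [sum_range_parseCount_rotate, if_pos hj.2]
          push_cast
          field_simp
        · intro j hjM hj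
          rw [mem_Icc, not_and, not_le] at hj
          rw [sum_range_parseCount_rotate, if_neg (not_le.2 (hj (mem_Icc.1 hjM).1)),
            Nat.cast_zero, mul_zero]
    _ = ((∑ j ∈ range (w.length + 1),
          (-1 : ℤ) ^ j * (cyclicAbCount w).choose (w.length - j) : ℤ) : ℚ) := by
        rw [range_eq_Ico, sum_eq_sum_Ico_succ_bot (Nat.succ_pos _), Nat.succ_eq_add_one,
          zero_add, Ico_add_one_right_eq_Icc, Nat.sub_zero, Nat.choose_eq_zero_of_lt hc]
        push_cast
        simp
    _ = if cyclicAbCount w = 0 then (-1) ^ w.length else 0 := by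
        rw [Int.sum_range_neg_one_pow_mul_choose_sub hc.le]
        split_ifs <;> simp

def words : ℕ → Finset (List Bool)
  | 0 => {[]}
  | n + 1 => (univ ×ˢ words n).image fun p => p.1 :: p.2

theorem mem_words {n : ℕ} {w : List Bool} : w ∈ words n ↔ w.length = n := by
  induction n generalizing w with
  | zero => simp [words]
  | succ n ih =>
    rcases w with _ | ⟨x, w⟩ <;> simp [words, ih]

theorem sum_words_succ {M : Type*} [AddCommMonoid M] (n : ℕ) (f : List Bool → M) :
    ∑ w ∈ words (n + 1), f w = ∑ x : Bool, ∑ w ∈ words n, f (x :: w) := by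
  rw [words, sum_image fun p _ q _ h => by simpa [Prod.ext_iff] using h, sum_product]

theorem sum_words_rotate {M : Type*} [AddCommMonoid M] (n r : ℕ) (g : List Bool → M) :
    ∑ w ∈ words n, g (w.rotate r) = ∑ w ∈ words n, g w := by
  have himage : (words n).image (·.rotate r) = words n := by
    refine eq_of_subset_of_card_le (fun w hw => ?_)
      (card_image_of_injective _ (List.rotate_injective r)).ge
    obtain ⟨v, hv, rfl⟩ := mem_image.1 hw
    rw [mem_words] at hv ⊢
    rwa [List.length_rotate]
  rw [← sum_image fun _ _ _ _ h => List.rotate_injective r h, himage]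

section Expansion

variable {A : Type*} [Semiring A] (a b : A)

def word (w : List Bool) : A := (w.map fun x => bif x then a else b).prod

theorem word_cons (x : Bool) (w : List Bool) :
    word a b (x :: w) = (bif x then a else b) * word a b w := by
  simp [word]

theorem word_replicate_true (n : ℕ) : word a b (List.replicate n true) = a ^ n := by
  simp [word]

theorem word_replicate_false (n : ℕ) : word a b (List.replicate n false) = b ^ n := by
  simp [word]

-- `blockProduct a b j 𝒜` is `y_{𝒜,j}(a,b)`, with `{1,…,j}` shifted to `range j`.
def blockProduct (j : ℕ) (𝒜 : Finset ℕ) : A :=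
  ((List.range j).map fun k => if k ∈ 𝒜 then a * b else a + b).prod

theorem blockProduct_succ_map (j : ℕ) (𝒜 : Finset ℕ) :
    blockProduct a b (j + 1) (𝒜.map (addRightEmbedding 1)) =
      (a + b) * blockProduct a b j 𝒜 := by
  simp [blockProduct, List.range_succ_eq_map, Function.comp_def]

theorem blockProduct_succ_insert_zero_map (j : ℕ) (𝒜 : Finset ℕ) :
    blockProduct a b (j + 1) (insert 0 (𝒜.map (addRightEmbedding 1))) =
      a * b * blockProduct a b j 𝒜 := by
  simp [blockProduct, List.range_succ_eq_map, Function.comp_def]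

def blockSum (j n : ℕ) : A :=
  ∑ 𝒜 ∈ (range j).powerset with j + #𝒜 = n, blockProduct a b j 𝒜

def parseSum (j n : ℕ) : A := ∑ w ∈ words n, parseCount j w • word a b w

theorem blockSum_succ (j n : ℕ) :
    blockSum a b (j + 1) n =
      (a + b) * ∑ 𝒜 ∈ (range j).powerset with j + #𝒜 + 1 = n, blockProduct a b j 𝒜 +
        a * b * ∑ 𝒜 ∈ (range j).powerset with j + #𝒜 + 2 = n, blockProduct a b j 𝒜 := by
  rw [blockSum, sum_filter, range_add_one_eq_insert_map, sum_powerset_insert (by simp),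
    sum_powerset_map, sum_powerset_map, sum_filter, sum_filter, mul_sum, mul_sum]
  congr 1 <;> refine sum_congr rfl fun 𝒜 h𝒜 => ?_
  · rw [card_map, blockProduct_succ_map, mul_ite, mul_zero]
    congr 1
    simp only [eq_iff_iff]
    omega
  · rw [card_insert_of_notMem (by simp), card_map, blockProduct_succ_insert_zero_map, mul_ite,
      mul_zero]
    congr 1
    simp only [eq_iff_iff]
    omega

theorem blockSum_zero (n : ℕ) : blockSum a b 0 n = if n = 0 then 1 else 0 := by
  rw [blockSum, range_zero, powerset_empty, sum_filter, sum_singleton, card_empty, zero_add]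
  simp [eq_comm, blockProduct]

theorem parseSum_zero (n : ℕ) : parseSum a b 0 n = if n = 0 then 1 else 0 := by
  rcases n with _ | n
  · simp [parseSum, words, parseCount, word]
  · refine sum_eq_zero fun w hw => ?_
    rw [mem_words] at hw
    rcases w with _ | ⟨x, w⟩
    · simp at hw
    · simp [parseCount]

theorem parseSum_succ_zero (j : ℕ) : parseSum a b (j + 1) 0 = 0 := by
  simp [parseSum, words, parseCount]

theorem parseSum_succ_one (j : ℕ) : parseSum a b (j + 1) 1 = (a + b) * parseSum a b j 0 := by
  rw [parseSum, parseSum, sum_words_succ, Fintype.sum_bool]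
  simp only [words, sum_singleton, parseCount, word_cons, add_mul, mul_smul_comm, smul_add,
    cond_true, cond_false]

theorem parseSum_succ_add_two (j n : ℕ) :
    parseSum a b (j + 1) (n + 2) =
      (a + b) * parseSum a b j (n + 1) + a * b * parseSum a b j n := by
  simp only [parseSum, sum_words_succ (n + 1), sum_words_succ n, Fintype.sum_bool, parseCount,
    word_cons, add_smul, sum_add_distrib, mul_sum, add_mul, mul_add, mul_smul_comm, smul_add,
    mul_assoc, cond_true, cond_false, Bool.not_true, Bool.not_false, Bool.and_true,
    Bool.and_false, Bool.false_eq_true, if_true, if_false, zero_smul, sum_const_zero, add_zero]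
  abel

theorem blockSum_eq_parseSum (j n : ℕ) : blockSum a b j n = parseSum a b j n := by
  induction j generalizing n with
  | zero => rw [blockSum_zero, parseSum_zero]
  | succ j ih =>
    rw [blockSum_succ]
    match n with
    | 0 => simp [parseSum_succ_zero]
    | 1 =>
      rw [parseSum_succ_one, ← ih]
      simp [blockSum]
    | n + 2 =>
      rw [parseSum_succ_add_two, ← ih, ← ih]
      simp [blockSum]

theorem sum_blockProduct_filter_lt (j m : ℕ) :
    ∑ 𝒜 ∈ (range j).powerset.filter (fun 𝒜 => j + 𝒜.card < m),
        ((List.range j).map (fun k => if k ∈ 𝒜 then a * b else a + b)).prod =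
      ∑ n ∈ range m, parseSum a b j n := by
  rw [← sum_fiberwise_of_maps_to (t := range m) (g := fun 𝒜 => j + #𝒜)
    fun 𝒜 h => mem_range.2 (mem_filter.1 h).2]
  refine sum_congr rfl fun n hn => ?_
  rw [← blockSum_eq_parseSum, blockSum, filter_filter]
  refine sum_congr (filter_congr fun 𝒜 _ => ?_) fun _ _ => rfl
  exact ⟨And.right, fun h => ⟨h ▸ mem_range.1 hn, h⟩⟩

end Expansion

section Commutators

variable (R : Type*) {A : Type*} [Semiring R] [Ring A] [Module R A]

def commutatorSpan : Submodule R A := Submodule.span R {y | ∃ p q, y = p * q - q * p}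

theorem prod_rotate_sub_prod_mem_commutatorSpan (l : List A) (r : ℕ) :
    (l.rotate r).prod - l.prod ∈ commutatorSpan R := by
  induction r with
  | zero => simp
  | succ r ih =>
    have hstep : ∀ v : List A, (v.rotate 1).prod - v.prod ∈ commutatorSpan R := by
      rintro (_ | ⟨x, t⟩)
      · simp
      · exact Submodule.subset_span ⟨t.prod, x, by simp [List.rotate_cons_succ]⟩
    rw [← List.rotate_rotate, ← sub_add_sub_cancel _ (l.rotate r).prod]
    exact add_mem (hstep _) ih

end Commutators

theorem mkQ_word_rotate (R : Type*) {A : Type*} [Ring R] [Ring A] [Module R A] (a b : A)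
    (w : List Bool) (r : ℕ) :
    (commutatorSpan R).mkQ (word a b (w.rotate r)) = (commutatorSpan R).mkQ (word a b w) := by
  rw [Submodule.mkQ_apply, Submodule.mkQ_apply, Submodule.Quotient.eq, word, word,
    List.map_rotate]
  exact prod_rotate_sub_prod_mem_commutatorSpan R _ r

section Averaging

variable {V : Type*} [AddCommGroup V] {q : List Bool → V}

theorem sum_words_smul_eq_average {K : Type*} [DivisionRing K] [CharZero K] [Module K V]
    (hq : ∀ w r, q (w.rotate r) = q w) (c : List Bool → K) {n : ℕ} (hn : n ≠ 0) :
    ∑ w ∈ words n, c w • q w =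
      ∑ w ∈ words n, ((n : K)⁻¹ * ∑ r ∈ range n, c (w.rotate r)) • q w := by
  have hshift : ∀ r, ∑ w ∈ words n, c (w.rotate r) • q w = ∑ w ∈ words n, c w • q w := by
    intro r
    simpa only [hq] using sum_words_rotate n r fun w => c w • q w
  simp_rw [mul_smul, sum_smul, ← smul_sum]
  rw [sum_comm, sum_congr rfl fun r _ => hshift r, sum_const, card_range,
    ← Nat.cast_smul_eq_nsmul K, smul_smul, inv_mul_cancel₀ (Nat.cast_ne_zero.2 hn), one_smul]

variable [Module ℚ V]

theorem sum_words_logCoeff_smul (hq : ∀ w r, q (w.rotate r) = q w) {M n : ℕ} (hn : 1 ≤ n)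
    (hnM : n ≤ M) :
    ∑ w ∈ words n, logCoeff M w • q w =
      ((-1) ^ n / n : ℚ) • (q (List.replicate n true) + q (List.replicate n false)) := by
  have hterm : ∀ w ∈ words n, ((n : ℚ)⁻¹ * ∑ r ∈ range n, logCoeff M (w.rotate r)) • q w =
      if cyclicAbCount w = 0 then ((-1) ^ n / n : ℚ) • q w else 0 := by
    intro w hw
    rw [mem_words] at hw
    subst hw
    rw [sum_range_logCoeff_rotate (List.ne_nil_of_length_pos hn) hnM]
    split_ifs
    · rw [inv_mul_eq_div]
    · rw [mul_zero, zero_smul]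
  have hfilter : {w ∈ words n | cyclicAbCount w = 0} =
      {List.replicate n true, List.replicate n false} := by
    ext w
    simp only [mem_filter, mem_words, cyclicAbCount_eq_zero_iff, mem_insert, mem_singleton]
    constructor
    · rintro ⟨rfl, h⟩
      exact h
    · rintro (rfl | rfl) <;> simp
  rw [sum_words_smul_eq_average hq _ (by omega), sum_congr rfl hterm, ← sum_filter, hfilter,
    sum_pair ((List.replicate_right_injective (by omega)).ne (by decide)), smul_add]

theorem sum_range_sum_words_logCoeff_smul (hq : ∀ w r, q (w.rotate r) = q w) (m : ℕ) :
    ∑ n ∈ range m, ∑ w ∈ words n, logCoeff (m - 1) w • q w =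
      ∑ n ∈ Icc 1 (m - 1),
        ((-1) ^ n / n : ℚ) • (q (List.replicate n true) + q (List.replicate n false)) := by
  rcases m with _ | M
  · simp
  rw [range_eq_Ico, sum_eq_sum_Ico_succ_bot (Nat.succ_pos _), Nat.succ_eq_add_one, zero_add,
    Ico_add_one_right_eq_Icc, Nat.add_sub_cancel]
  simp only [words, sum_singleton, logCoeff_nil, zero_smul, zero_add]
  exact sum_congr rfl fun n hn => sum_words_logCoeff_smul hq (mem_Icc.1 hn).1 (mem_Icc.1 hn).2

end Averaging

end BoolWord

open BoolWord in
theorem Zm_mem_commutatorSubspace_general (m : ℕ) (a b : FreeAlgebra ℚ Bool) :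
    (∑ j ∈ Finset.Icc 1 (m - 1), ((-1 : ℚ) ^ j / (j : ℚ)) •
        ((∑ 𝒜 ∈ (Finset.range j).powerset.filter (fun 𝒜 => j + 𝒜.card < m),
            ((List.range j).map (fun k => if k ∈ 𝒜 then a * b else a + b)).prod)
          - a ^ j - b ^ j)) ∈
      Submodule.span ℚ
        {y : FreeAlgebra ℚ Bool | ∃ p q, y = p * q - q * p} := by
  set π := (commutatorSpan ℚ (A := FreeAlgebra ℚ Bool)).mkQ
  have hq : ∀ w r, π (word a b (w.rotate r)) = π (word a b w) := mkQ_word_rotate ℚ a b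
  have hexpand : ∀ j : ℕ, ((-1 : ℚ) ^ j / j) • ∑ n ∈ range m, π (parseSum a b j n) =
      ∑ n ∈ range m, ∑ w ∈ words n, ((-1 : ℚ) ^ j / j * parseCount j w) • π (word a b w) := by
    intro j
    simp only [parseSum, map_sum, smul_sum, ← Nat.cast_smul_eq_nsmul ℚ, map_smul, smul_smul]
  have hlog := sum_range_sum_words_logCoeff_smul (q := fun w => π (word a b w)) hq m
  simp only [logCoeff] at hlog
  rw [← Submodule.Quotient.mk_eq_zero, ← Submodule.mkQ_apply]
  change π _ = 0
  simp only [sum_blockProduct_filter_lt, ← word_replicate_true a b, ← word_replicate_false a b,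
    map_sum, map_smul, map_sub, smul_sub, sum_sub_distrib, hexpand]
  rw [sum_comm, sum_congr rfl fun n _ => sum_comm]
  simp only [← sum_smul]
  rw [hlog, sub_sub, ← sum_add_distrib]
  simp only [smul_add, sub_self]

/-- In ℚ⟨a,b⟩, for every m ≥ 1 the element
Z_m(a,b) = ∑_{j=1}^{m−1} ((−1)^j/j)·[ ∑_{𝒜 ⊆ {1,…,j}, j+|𝒜| < m} y_{𝒜,j}(a,b)
− a^j − b^j ] lies in the commutator subspace of ℚ⟨a,b⟩. -/
theorem Zm_mem_commutatorSubspace (m : ℕ) (hm : 1 ≤ m)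
    (a b : FreeAlgebra ℚ Bool) (ha : a = FreeAlgebra.ι ℚ true)
    (hb : b = FreeAlgebra.ι ℚ false) :
    (∑ j ∈ Finset.Icc 1 (m - 1), ((-1 : ℚ) ^ j / (j : ℚ)) •
        ((∑ 𝒜 ∈ (Finset.range j).powerset.filter (fun 𝒜 => j + 𝒜.card < m),
            ((List.range j).map (fun k => if k ∈ 𝒜 then a * b else a + b)).prod)
          - a ^ j - b ^ j)) ∈
      Submodule.span ℚ
        {y : FreeAlgebra ℚ Bool | ∃ p q, y = p * q - q * p} :=
  Zm_mem_commutatorSubspace_general m a b
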